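/- Let G_κ denote the monoid of all automorphisms φ of F₂ such that φ(a) and φ(b) are positive words and φ(κ) = κ. The map assigning to each φ ∈ G_κ the 2×2 integer matrix induced by φ on the abelianization ℤ² of F₂ (with respect to the basis given by the images of a and b) is a monoid isomorphism from G_κ onto the monoid of 2×2 integer matrices with determinant 1 and nonnegative entries; in particular it sends T̂₁ and T̂₂ to the two free generators of that matrix monoid. -/

import Mathlib

/-- The matrix `T₁` with rows `(1,1), (0,1)`. -/
def T1 : Matrix (Fin 2) (Fin 2) ℤ := !![1, 1; 0, 1]

/-- The matrix `T₂` with rows `(1,0), (1,1)`. -/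
def T2 : Matrix (Fin 2) (Fin 2) ℤ := !![1, 0; 1, 1]

/-- The free group on two generators. -/
abbrev F2 := FreeGroup (Fin 2)

/-- The first generator `a` of `F₂`. -/
def a : F2 := FreeGroup.of 0

/-- The second generator `b` of `F₂`. -/
def b : F2 := FreeGroup.of 1

/-- The commutator `κ = a·b·a⁻¹·b⁻¹`. -/
def kappa : F2 := a * b * a⁻¹ * b⁻¹

/-- The endomorphism `T̂₁` of `F₂` determined by `a ↦ a·b`, `b ↦ b`. -/
def T1hat : Monoid.End F2 := FreeGroup.lift fun i => if i = 0 then a * b else b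

/-- The endomorphism `T̂₂` of `F₂` determined by `a ↦ a`, `b ↦ b·a`. -/
def T2hat : Monoid.End F2 := FreeGroup.lift fun i => if i = 0 then a else b * a

/-- The exponent sum of the generator `i` in a word of `F₂`: the coordinate of the image
of the word in the abelianization `ℤ²` of `F₂`. -/
def expSum (i : Fin 2) : F2 →* Multiplicative ℤ :=
  FreeGroup.lift fun j => Multiplicative.ofAdd (if j = i then (1 : ℤ) else 0)

/-- The 2×2 integer matrix induced by an endomorphism of `F₂` on the abelianization `ℤ²`,
with respect to the basis given by the images of `a` and `b`: the `j`-th column consists of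
the coordinates of the image in `ℤ²` of `φ` applied to the `j`-th generator. -/
def inducedMatrix (φ : Monoid.End F2) : Matrix (Fin 2) (Fin 2) ℤ :=
  Matrix.of fun i j => Multiplicative.toAdd (expSum i (φ (FreeGroup.of j)))

/-- `G_κ`: the set of automorphisms of `F₂` sending both generators to positive words and
fixing the commutator `κ` exactly. -/
def Gkappa : Set (Monoid.End F2) :=
  {φ | Function.Bijective φ ∧
    φ a ∈ Submonoid.closure ({a, b} : Set F2) ∧
    φ b ∈ Submonoid.closure ({a, b} : Set F2) ∧
    φ kappa = kappa}

/-!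
Write `u = φ a` and `v = φ b` as positive words. Then `φ κ = κ` says `(uv)(vu)⁻¹ = κ`; cancelling
the common suffix of `uv` and `vu` leaves a reduced word, which must be the word of `κ`, so
`uv = ab·s` and `vu = ba·s`. Comparing suffixes of length at most `|s|` shows that either `φ = 1`
or the shorter of `u, v` is a suffix of the longer one, i.e. `φ = ψ T̂₁` or `φ = ψ T̂₂` with
`ψ ∈ G_κ` of smaller total length. Hence `G_κ` is generated by `T̂₁, T̂₂`, which induce `T₂, T₁`,
and these generate the nonnegative unimodular matrices by the Euclidean descent that subtracts
the smaller row from the larger one. Injectivity follows by peeling off the last generator: for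
nonnegative unimodular `P, Q`, the matrices `P T₂`, `Q T₁` and `1` are pairwise distinct.
-/

theorem List.suffix_of_append_eq_cons_cons {α : Type*} {u v s : List α} {x y x' y' : α}
    (h₁ : u ++ v = x :: y :: s) (h₂ : v ++ u = x' :: y' :: s) (hvu : v.length ≤ u.length)
    (hu : 2 ≤ u.length) : v <:+ u := by
  have hlen : u.length + v.length = s.length + 2 := by simpa using congrArg List.length h₁
  have hvs : v <:+ s := by
    have hv : v <:+ x :: y :: s := h₁ ▸ List.suffix_append u v
    rcases List.suffix_cons_iff.1 hv with rfl | hv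
    · simp only [List.length_cons] at hlen; omega
    rcases List.suffix_cons_iff.1 hv with rfl | hv
    · simp only [List.length_cons] at hlen; omega
    exact hv
  have hsuf : s <:+ v ++ u := h₂ ▸ (List.suffix_cons _ _).trans (List.suffix_cons _ _)
  exact List.suffix_of_suffix_length_le (hvs.trans hsuf) (List.suffix_append v u) hvu

namespace FreeGroup

variable {α : Type*}

def positiveWord (l : List α) : FreeGroup α := mk (l.map (·, true))

theorem positiveWord_append (l₁ l₂ : List α) :
    positiveWord (l₁ ++ l₂) = positiveWord l₁ * positiveWord l₂ := by
  simp [positiveWord, mul_mk]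

theorem positiveWord_inv (l : List α) :
    (positiveWord l)⁻¹ = mk (l.reverse.map (·, false)) := by
  simp [positiveWord, inv_mk, invRev, List.map_reverse, Function.comp_def]

theorem isReduced_map_prodMk (l : List α) (b : Bool) : IsReduced (l.map (·, b)) :=
  (List.isChain_map _).2 (List.pairwise_of_forall fun _ _ _ => rfl).isChain

theorem map_true_append_map_false_inj {A A' C C' : List α}
    (h : A.map (·, true) ++ C.map (·, false) = A'.map (·, true) ++ C'.map (·, false)) :
    A = A' ∧ C = C' := by
  have h₁ := congrArg (List.filterMap fun p => if p.2 then some p.1 else none) h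
  have h₂ := congrArg (List.filterMap fun p => if p.2 then none else some p.1) h
  simp only [List.filterMap_append, List.filterMap_map] at h₁ h₂
  simpa using And.intro h₁ h₂

theorem toWord_positiveWord_mul_inv [DecidableEq α] {A B : List α}
    (hAB : ∀ x ∈ A.getLast?, x ∉ B.getLast?) :
    (positiveWord A * (positiveWord B)⁻¹).toWord = A.map (·, true) ++ B.reverse.map (·, false) := by
  rw [positiveWord_inv, positiveWord, mul_mk, toWord_mk, IsReduced.reduce_eq]
  refine (isReduced_map_prodMk _ _).append (isReduced_map_prodMk _ _) ?_
  intro p hp q hq hpq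
  simp only [List.getLast?_map, List.head?_map, List.head?_reverse, Option.mem_map] at hp hq
  obtain ⟨x, hx, rfl⟩ := hp
  obtain ⟨y, hy, rfl⟩ := hq
  obtain rfl : x = y := hpq
  exact (hAB x hx hy).elim

theorem norm_positiveWord [DecidableEq α] (l : List α) : (positiveWord l).norm = l.length := by
  rw [norm, positiveWord, toWord_mk, (isReduced_map_prodMk l true).reduce_eq, List.length_map]

end FreeGroup

open FreeGroup (positiveWord positiveWord_append norm_positiveWord)

theorem kappa_eq_positiveWord : kappa = positiveWord [0, 1] * (positiveWord [1, 0])⁻¹ := by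
  decide

theorem eq_of_positiveWord_mul_inv_eq_kappa {A B : List (Fin 2)}
    (hAB : ∀ x ∈ A.getLast?, x ∉ B.getLast?) (h : positiveWord A * (positiveWord B)⁻¹ = kappa) :
    A = [0, 1] ∧ B = [1, 0] := by
  have hw := FreeGroup.toWord_positiveWord_mul_inv hAB
  rw [h, kappa_eq_positiveWord, FreeGroup.toWord_positiveWord_mul_inv (by decide)] at hw
  obtain ⟨hA, hB⟩ := FreeGroup.map_true_append_map_false_inj hw.symm
  exact ⟨hA, List.reverse_injective hB⟩

theorem exists_eq_cons_of_positiveWord_mul_inv_eq_kappa (A B : List (Fin 2))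
    (h : positiveWord A * (positiveWord B)⁻¹ = kappa) :
    ∃ s, A = 0 :: 1 :: s ∧ B = 1 :: 0 :: s := by
  induction B using List.reverseRecOn generalizing A with
  | nil => exact ⟨[], eq_of_positiveWord_mul_inv_eq_kappa (by simp) h⟩
  | append_singleton B y ih =>
    rcases A.eq_nil_or_concat with rfl | ⟨A, x, rfl⟩
    · exact ⟨[], eq_of_positiveWord_mul_inv_eq_kappa (by simp) h⟩
    by_cases hxy : x = y
    · subst hxy
      have h' : positiveWord A * (positiveWord B)⁻¹ = kappa := by
        rw [← h, List.concat_eq_append, positiveWord_append, positiveWord_append]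
        group
      obtain ⟨s, rfl, rfl⟩ := ih A h'
      exact ⟨s ++ [x], by simp, by simp⟩
    · exact ⟨[], eq_of_positiveWord_mul_inv_eq_kappa (by simpa [eq_comm] using hxy) h⟩

theorem eq_singletons_or_isSuffix_of_append_eq {u v s : List (Fin 2)} (h₁ : u ++ v = 0 :: 1 :: s)
    (h₂ : v ++ u = 1 :: 0 :: s) :
    (u = [0] ∧ v = [1]) ∨ (v ≠ [] ∧ v <:+ u) ∨ (u ≠ [] ∧ u <:+ v) := by
  have hne : u ++ v ≠ v ++ u := by rw [h₁, h₂]; simp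
  have hu : u ≠ [] := by rintro rfl; simp at hne
  have hv : v ≠ [] := by rintro rfl; simp at hne
  by_cases hlen : u.length ≤ 1 ∧ v.length ≤ 1
  · obtain ⟨x, rfl⟩ := List.length_eq_one_iff.1 (hlen.1.antisymm (List.length_pos_iff.2 hu))
    obtain ⟨y, rfl⟩ := List.length_eq_one_iff.1 (hlen.2.antisymm (List.length_pos_iff.2 hv))
    simp only [List.cons_append, List.nil_append, List.cons.injEq] at h₁
    exact Or.inl ⟨by rw [h₁.1], by rw [h₁.2.1]⟩
  rcases le_total v.length u.length with hvu | huv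
  · exact Or.inr (Or.inl ⟨hv, List.suffix_of_append_eq_cons_cons h₁ h₂ hvu (by omega)⟩)
  · exact Or.inr (Or.inr ⟨hu, List.suffix_of_append_eq_cons_cons h₂ h₁ huv (by omega)⟩)

@[simp] theorem T1hat_a : T1hat a = a * b := rfl
@[simp] theorem T1hat_b : T1hat b = b := rfl
@[simp] theorem T2hat_a : T2hat a = a := rfl
@[simp] theorem T2hat_b : T2hat b = b * a := rfl

def T1hatInv : Monoid.End F2 := FreeGroup.lift fun i => if i = 0 then a * b⁻¹ else b
def T2hatInv : Monoid.End F2 := FreeGroup.lift fun i => if i = 0 then a else b * a⁻¹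

@[simp] theorem T1hatInv_a : T1hatInv a = a * b⁻¹ := rfl
@[simp] theorem T1hatInv_b : T1hatInv b = b := rfl
@[simp] theorem T2hatInv_a : T2hatInv a = a := rfl
@[simp] theorem T2hatInv_b : T2hatInv b = b * a⁻¹ := rfl

theorem Monoid.End.ext_F2 {f g : Monoid.End F2} (ha : f a = g a) (hb : f b = g b) : f = g :=
  FreeGroup.ext_hom _ _ fun i ↦ by fin_cases i; exacts [ha, hb]

theorem T1hat_mul_T1hatInv : T1hat * T1hatInv = 1 := Monoid.End.ext_F2 (by simp) (by simp)
theorem T1hatInv_mul_T1hat : T1hatInv * T1hat = 1 := Monoid.End.ext_F2 (by simp) (by simp)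
theorem T2hat_mul_T2hatInv : T2hat * T2hatInv = 1 := Monoid.End.ext_F2 (by simp) (by simp)
theorem T2hatInv_mul_T2hat : T2hatInv * T2hat = 1 := Monoid.End.ext_F2 (by simp) (by simp)

theorem Monoid.End.bijective_of_isUnit {M : Type*} [Monoid M] {f : Monoid.End M} (hf : IsUnit f) :
    Function.Bijective f := by
  obtain ⟨u, rfl⟩ := hf
  exact Function.bijective_iff_has_inverse.2
    ⟨(↑u⁻¹ : Monoid.End M), fun x ↦ DFunLike.congr_fun u.inv_mul x,
      fun x ↦ DFunLike.congr_fun u.mul_inv x⟩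

theorem mem_closure_pair_iff {x : F2} :
    x ∈ Submonoid.closure ({a, b} : Set F2) ↔ ∃ l, positiveWord l = x := by
  constructor
  · intro hx
    induction hx using Submonoid.closure_induction with
    | mem y hy => rcases hy with rfl | rfl; exacts [⟨[0], rfl⟩, ⟨[1], rfl⟩]
    | one => exact ⟨[], rfl⟩
    | mul x y _ _ hx hy =>
      obtain ⟨l₁, rfl⟩ := hx
      obtain ⟨l₂, rfl⟩ := hy
      exact ⟨l₁ ++ l₂, positiveWord_append l₁ l₂⟩
  · rintro ⟨l, rfl⟩
    induction l with
    | nil => exact one_mem _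
    | cons i l ih =>
      rw [← List.singleton_append, positiveWord_append]
      refine mul_mem (Submonoid.subset_closure ?_) ih
      fin_cases i
      exacts [Set.mem_insert a _, Set.mem_insert_of_mem a rfl]

theorem map_mem_closure_pair {φ : Monoid.End F2} (ha : φ a ∈ Submonoid.closure ({a, b} : Set F2))
    (hb : φ b ∈ Submonoid.closure ({a, b} : Set F2)) {x : F2}
    (hx : x ∈ Submonoid.closure ({a, b} : Set F2)) :
    φ x ∈ Submonoid.closure ({a, b} : Set F2) :=
  (Submonoid.closure_le (S := (Submonoid.closure {a, b}).comap φ)).2 (Set.pair_subset ha hb) hx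

def GkappaSubmonoid : Submonoid (Monoid.End F2) where
  carrier := Gkappa
  one_mem' := ⟨Function.bijective_id, Submonoid.subset_closure (Set.mem_insert a _),
    Submonoid.subset_closure (Set.mem_insert_of_mem a rfl), rfl⟩
  mul_mem' {φ _} hφ hψ := ⟨hφ.1.comp hψ.1, map_mem_closure_pair hφ.2.1 hφ.2.2.1 hψ.2.1,
    map_mem_closure_pair hφ.2.1 hφ.2.2.1 hψ.2.2.1,
    (congrArg φ hψ.2.2.2).trans hφ.2.2.2⟩

theorem T1hat_mem_Gkappa : T1hat ∈ Gkappa :=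
  ⟨Monoid.End.bijective_of_isUnit ⟨⟨_, _, T1hat_mul_T1hatInv, T1hatInv_mul_T1hat⟩, rfl⟩,
    mem_closure_pair_iff.2 ⟨[0, 1], rfl⟩, mem_closure_pair_iff.2 ⟨[1], rfl⟩, by decide⟩

theorem T2hat_mem_Gkappa : T2hat ∈ Gkappa :=
  ⟨Monoid.End.bijective_of_isUnit ⟨⟨_, _, T2hat_mul_T2hatInv, T2hatInv_mul_T2hat⟩, rfl⟩,
    mem_closure_pair_iff.2 ⟨[0], rfl⟩, mem_closure_pair_iff.2 ⟨[1, 0], rfl⟩, by decide⟩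

def wordLength (φ : Monoid.End F2) : ℕ := (φ a).norm + (φ b).norm

theorem exists_mul_eq_of_mul_eq_one {φ T T' : Monoid.End F2} (hφ : φ ∈ Gkappa)
    (hT : T ∈ Gkappa) (h₁ : T * T' = 1) (h₂ : T' * T = 1) {w₁ w₂ : List (Fin 2)}
    (ha : φ (T' a) = positiveWord w₁) (hb : φ (T' b) = positiveWord w₂) :
    ∃ ψ ∈ Gkappa, wordLength ψ = w₁.length + w₂.length ∧ φ = ψ * T := by
  have hκ : T' kappa = kappa := by
    conv_lhs => rw [← hT.2.2.2]
    exact DFunLike.congr_fun h₂ kappa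
  refine ⟨φ * T', ⟨hφ.1.comp (Monoid.End.bijective_of_isUnit ⟨⟨_, _, h₂, h₁⟩, rfl⟩),
    mem_closure_pair_iff.2 ⟨w₁, ha.symm⟩, mem_closure_pair_iff.2 ⟨w₂, hb.symm⟩,
    (congrArg φ hκ).trans hφ.2.2.2⟩, ?_, ?_⟩
  · simp [wordLength, Monoid.End.coe_mul, ha, hb, norm_positiveWord]
  · rw [mul_assoc, h₂, mul_one]

theorem eq_one_or_exists_mul_eq {φ : Monoid.End F2} (hφ : φ ∈ Gkappa) :
    φ = 1 ∨ ∃ ψ ∈ Gkappa, ∃ T ∈ ({T1hat, T2hat} : Set (Monoid.End F2)),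
      wordLength ψ < wordLength φ ∧ φ = ψ * T := by
  obtain ⟨u, hu⟩ := mem_closure_pair_iff.1 hφ.2.1
  obtain ⟨v, hv⟩ := mem_closure_pair_iff.1 hφ.2.2.1
  have hlen : wordLength φ = u.length + v.length := by
    rw [wordLength, ← hu, ← hv, norm_positiveWord, norm_positiveWord]
  have hκ : positiveWord (u ++ v) * (positiveWord (v ++ u))⁻¹ = kappa := by
    rw [positiveWord_append, positiveWord_append, hu, hv]
    conv_rhs => rw [← hφ.2.2.2]
    rw [kappa, map_mul, map_mul, map_mul, map_inv, map_inv]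
    group
  obtain ⟨s, h₁, h₂⟩ := exists_eq_cons_of_positiveWord_mul_inv_eq_kappa _ _ hκ
  rcases eq_singletons_or_isSuffix_of_append_eq h₁ h₂ with
    ⟨rfl, rfl⟩ | ⟨hv₀, w, rfl⟩ | ⟨hu₀, w, rfl⟩
  · exact Or.inl (Monoid.End.ext_F2 hu.symm hv.symm)
  · obtain ⟨ψ, hψ, hψlen, rfl⟩ := exists_mul_eq_of_mul_eq_one hφ T1hat_mem_Gkappa
      T1hat_mul_T1hatInv T1hatInv_mul_T1hat (w₁ := w) (w₂ := v)
      (by simp [← hu, ← hv, positiveWord_append]) (by simp [← hv])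
    refine Or.inr ⟨ψ, hψ, T1hat, Set.mem_insert _ _, ?_, rfl⟩
    have := List.length_pos_iff.2 hv₀
    simp only [hlen, hψlen, List.length_append]
    omega
  · obtain ⟨ψ, hψ, hψlen, rfl⟩ := exists_mul_eq_of_mul_eq_one hφ T2hat_mem_Gkappa
      T2hat_mul_T2hatInv T2hatInv_mul_T2hat (w₁ := u) (w₂ := w)
      (by simp [← hu]) (by simp [← hu, ← hv, positiveWord_append])
    refine Or.inr ⟨ψ, hψ, T2hat, Set.mem_insert_of_mem _ rfl, ?_, rfl⟩
    have := List.length_pos_iff.2 hu₀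
    simp only [hlen, hψlen, List.length_append]
    omega

theorem GkappaSubmonoid_eq_closure : GkappaSubmonoid = Submonoid.closure {T1hat, T2hat} := by
  refine le_antisymm (fun φ hφ ↦ ?_)
    (Submonoid.closure_le.2 (Set.pair_subset T1hat_mem_Gkappa T2hat_mem_Gkappa))
  induction hn : wordLength φ using Nat.strong_induction_on generalizing φ with
  | _ n ih =>
  rcases eq_one_or_exists_mul_eq hφ with rfl | ⟨ψ, hψ, T, hT, hlt, rfl⟩
  · exact one_mem _
  · exact mul_mem (ih _ (hn ▸ hlt) _ hψ rfl) (Submonoid.subset_closure hT)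

open Matrix

def nonnegUnimodular : Submonoid (Matrix (Fin 2) (Fin 2) ℤ) where
  carrier := {M | M.det = 1 ∧ ∀ i j, 0 ≤ M i j}
  one_mem' := ⟨det_one, fun i j ↦ by rw [one_apply]; split_ifs <;> norm_num⟩
  mul_mem' {M N} hM hN := ⟨by rw [det_mul, hM.1, hN.1, mul_one], fun i j ↦ by
    rw [mul_apply]; exact Finset.sum_nonneg fun k _ ↦ mul_nonneg (hM.2 i k) (hN.2 k j)⟩

theorem fin_two_mem_nonnegUnimodular_iff {p q r s : ℤ} :
    !![p, q; r, s] ∈ nonnegUnimodular ↔ p * s - q * r = 1 ∧ 0 ≤ p ∧ 0 ≤ q ∧ 0 ≤ r ∧ 0 ≤ s := by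
  simp [nonnegUnimodular, Fin.forall_fin_two, det_fin_two_of, and_assoc]

theorem eq_identity_or_rows_le {p q r s : ℤ} (hdet : p * s - q * r = 1) (hp : 0 ≤ p)
    (hq : 0 ≤ q) (hr : 0 ≤ r) (hs : 0 ≤ s) :
    (p = 1 ∧ q = 0 ∧ r = 0 ∧ s = 1) ∨ (r ≤ p ∧ s ≤ q) ∨ (p ≤ r ∧ q ≤ s) := by
  by_cases h₁ : r ≤ p ∧ s ≤ q
  · exact Or.inr (Or.inl h₁)
  by_cases h₂ : p ≤ r ∧ q ≤ s
  · exact Or.inr (Or.inr h₂)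
  have hrp : r < p := by
    by_contra! hpr
    have hsq : s < q := by by_contra! h; exact h₂ ⟨hpr, h⟩
    nlinarith [mul_le_mul_of_nonneg_right hpr hs, mul_le_mul_of_nonneg_left hsq.le hr]
  have hqs : q < s := by by_contra! h; exact h₁ ⟨hrp.le, h⟩
  -- `1 = p * s - q * r ≥ (r + 1) * (q + 1) - q * r = q + r + 1`
  have hq₀ : q = 0 := by nlinarith
  have hr₀ : r = 0 := by nlinarith
  rw [hq₀, hr₀, mul_zero, sub_zero] at hdet
  exact Or.inl ⟨Int.eq_one_of_mul_eq_one_right hp hdet, hq₀, hr₀,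
    Int.eq_one_of_mul_eq_one_left hs hdet⟩

theorem fin_two_mem_closure_T1_T2 {p q r s : ℤ} (h : !![p, q; r, s] ∈ nonnegUnimodular) :
    !![p, q; r, s] ∈ Submonoid.closure {T1, T2} := by
  induction hn : (p + q + r + s).toNat using Nat.strong_induction_on generalizing p q r s with
  | _ n ih =>
  obtain ⟨hdet, hp, hq, hr, hs⟩ := fin_two_mem_nonnegUnimodular_iff.1 h
  rcases eq_identity_or_rows_le hdet hp hq hr hs with ⟨rfl, rfl, rfl, rfl⟩ | h | h
  · rw [← one_fin_two]
    exact one_mem _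
  · have hrs : 0 < r + s := by nlinarith
    rw [show !![p, q; r, s] = T1 * !![p - r, q - s; r, s] by simp [T1]]
    refine mul_mem (Submonoid.subset_closure (Set.mem_insert _ _)) (ih _ ?_ ?_ rfl)
    · omega
    · exact fin_two_mem_nonnegUnimodular_iff.2 ⟨by linarith, by linarith, by linarith, hr, hs⟩
  · have hpq : 0 < p + q := by nlinarith
    rw [show !![p, q; r, s] = T2 * !![p, q; r - p, s - q] by simp [T2]]
    refine mul_mem (Submonoid.subset_closure (Set.mem_insert_of_mem _ rfl)) (ih _ ?_ ?_ rfl)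
    · omega
    · exact fin_two_mem_nonnegUnimodular_iff.2 ⟨by linarith, hp, hq, by linarith, by linarith⟩

theorem closure_T1_T2 : Submonoid.closure {T1, T2} = nonnegUnimodular := by
  refine le_antisymm (Submonoid.closure_le.2 (Set.pair_subset ?_ ?_)) fun M hM ↦ ?_
  · exact fin_two_mem_nonnegUnimodular_iff.2 (by norm_num)
  · exact fin_two_mem_nonnegUnimodular_iff.2 (by norm_num)
  · rw [eta_fin_two M] at hM ⊢
    exact fin_two_mem_closure_T1_T2 hM

theorem toAdd_expSum_map (φ : Monoid.End F2) (i : Fin 2) (x : F2) :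
    (expSum i (φ x)).toAdd = ∑ j, inducedMatrix φ i j * (expSum j x).toAdd := by
  induction x using FreeGroup.induction_on with
  | C1 => simp
  | of j => fin_cases j <;> simp [inducedMatrix, expSum]
  | inv_of j ih => simp [ih]
  | mul x y hx hy => simp [hx, hy, mul_add, Finset.sum_add_distrib]

theorem inducedMatrix_mul (φ ψ : Monoid.End F2) :
    inducedMatrix (φ * ψ) = inducedMatrix φ * inducedMatrix ψ := by
  ext i j
  rw [mul_apply, inducedMatrix, of_apply, Monoid.End.coe_mul, Function.comp_apply, toAdd_expSum_map]
  rfl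

def inducedMatrixHom : Monoid.End F2 →* Matrix (Fin 2) (Fin 2) ℤ where
  toFun := inducedMatrix
  map_one' := by decide
  map_mul' := inducedMatrix_mul

theorem inducedMatrix_T1hat : inducedMatrix T1hat = T2 := by decide
theorem inducedMatrix_T2hat : inducedMatrix T2hat = T1 := by decide

theorem image_inducedMatrix_Gkappa : inducedMatrix '' Gkappa = nonnegUnimodular := by
  have hG : Gkappa = (Submonoid.closure {T1hat, T2hat} : Set (Monoid.End F2)) :=
    congrArg SetLike.coe GkappaSubmonoid_eq_closure
  rw [hG, ← closure_T1_T2, Set.pair_comm T1, ← inducedMatrix_T1hat, ← inducedMatrix_T2hat,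
    ← Set.image_pair]
  exact (Submonoid.coe_map inducedMatrixHom _).symm.trans
    (congrArg SetLike.coe (MonoidHom.map_mclosure inducedMatrixHom _))

theorem inducedMatrix_mem_nonnegUnimodular {φ : Monoid.End F2} (hφ : φ ∈ Gkappa) :
    inducedMatrix φ ∈ nonnegUnimodular :=
  SetLike.mem_coe.1 (image_inducedMatrix_Gkappa ▸ Set.mem_image_of_mem _ hφ)

theorem mul_T2_ne_one {P : Matrix (Fin 2) (Fin 2) ℤ} (hP : P ∈ nonnegUnimodular) :
    P * T2 ≠ 1 := by
  intro h
  have h₁₀ : P 1 0 + P 1 1 = 0 := by simpa [T2, mul_apply] using congrFun₂ h 1 0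
  have h₁₁ : P 1 1 = 1 := by simpa [T2, mul_apply] using congrFun₂ h 1 1
  linarith [hP.2 1 0]

theorem mul_T1_ne_one {P : Matrix (Fin 2) (Fin 2) ℤ} (hP : P ∈ nonnegUnimodular) :
    P * T1 ≠ 1 := by
  intro h
  have h₀₀ : P 0 0 = 1 := by simpa [T1, mul_apply] using congrFun₂ h 0 0
  have h₀₁ : P 0 0 + P 0 1 = 0 := by simpa [T1, mul_apply] using congrFun₂ h 0 1
  linarith [hP.2 0 1]

theorem mul_T2_ne_mul_T1 {P Q : Matrix (Fin 2) (Fin 2) ℤ} (hP : P ∈ nonnegUnimodular)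
    (hQ : Q ∈ nonnegUnimodular) : P * T2 ≠ Q * T1 := by
  intro h
  have h₀₀ : P 0 0 + P 0 1 = Q 0 0 := by simpa [T1, T2, mul_apply] using congrFun₂ h 0 0
  have h₀₁ : P 0 1 = Q 0 0 + Q 0 1 := by simpa [T1, T2, mul_apply] using congrFun₂ h 0 1
  have h₁₀ : P 1 0 + P 1 1 = Q 1 0 := by simpa [T1, T2, mul_apply] using congrFun₂ h 1 0
  have h₁₁ : P 1 1 = Q 1 0 + Q 1 1 := by simpa [T1, T2, mul_apply] using congrFun₂ h 1 1
  have hP₀₀ : P 0 0 = 0 := by linarith [hP.2 0 0, hQ.2 0 1]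
  have hP₁₀ : P 1 0 = 0 := by linarith [hP.2 1 0, hQ.2 1 1]
  have hdet := hP.1
  rw [det_fin_two, hP₀₀, hP₁₀] at hdet
  norm_num at hdet

theorem isUnit_of_mem_nonnegUnimodular {M : Matrix (Fin 2) (Fin 2) ℤ}
    (hM : M ∈ nonnegUnimodular) : IsUnit M :=
  (isUnit_iff_isUnit_det M).2 (hM.1 ▸ isUnit_one)

theorem inducedMatrix_mul_ne_one {ψ T : Monoid.End F2} (hψ : ψ ∈ Gkappa)
    (hT : T ∈ ({T1hat, T2hat} : Set (Monoid.End F2))) : inducedMatrix (ψ * T) ≠ 1 := by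
  rcases hT with rfl | rfl <;> rw [inducedMatrix_mul]
  · exact inducedMatrix_T1hat ▸ mul_T2_ne_one (inducedMatrix_mem_nonnegUnimodular hψ)
  · exact inducedMatrix_T2hat ▸ mul_T1_ne_one (inducedMatrix_mem_nonnegUnimodular hψ)

theorem eq_of_inducedMatrix_mul_eq {φ ψ T T' : Monoid.End F2} (hφ : φ ∈ Gkappa)
    (hψ : ψ ∈ Gkappa) (hT : T ∈ ({T1hat, T2hat} : Set (Monoid.End F2)))
    (hT' : T' ∈ ({T1hat, T2hat} : Set (Monoid.End F2)))
    (h : inducedMatrix (φ * T) = inducedMatrix (ψ * T')) : T = T' := by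
  have hφM := inducedMatrix_mem_nonnegUnimodular hφ
  have hψM := inducedMatrix_mem_nonnegUnimodular hψ
  rcases hT with rfl | rfl <;> rcases hT' with rfl | rfl <;>
    simp only [inducedMatrix_mul, inducedMatrix_T1hat, inducedMatrix_T2hat] at h
  · rfl
  · exact (mul_T2_ne_mul_T1 hφM hψM h).elim
  · exact (mul_T2_ne_mul_T1 hψM hφM h.symm).elim
  · rfl

theorem injOn_inducedMatrix_Gkappa : Set.InjOn inducedMatrix Gkappa := by
  intro φ hφ ψ hψ h
  induction hn : wordLength φ using Nat.strong_induction_on generalizing φ ψ with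
  | _ n ih =>
  rcases eq_one_or_exists_mul_eq hφ with rfl | ⟨φ₁, hφ₁, T, hT, hlt, rfl⟩ <;>
    rcases eq_one_or_exists_mul_eq hψ with rfl | ⟨ψ₁, hψ₁, T', hT', -, rfl⟩
  · rfl
  · exact (inducedMatrix_mul_ne_one hψ₁ hT' (h.symm.trans (map_one inducedMatrixHom))).elim
  · exact (inducedMatrix_mul_ne_one hφ₁ hT (h.trans (map_one inducedMatrixHom))).elim
  obtain rfl := eq_of_inducedMatrix_mul_eq hφ₁ hψ₁ hT hT' h
  have hTunit : IsUnit (inducedMatrix T) := isUnit_of_mem_nonnegUnimodular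
    (inducedMatrix_mem_nonnegUnimodular (Set.pair_subset T1hat_mem_Gkappa T2hat_mem_Gkappa hT))
  rw [inducedMatrix_mul, inducedMatrix_mul] at h
  rw [ih _ (hn ▸ hlt) hφ₁ hψ₁ (hTunit.mul_right_cancel h) rfl]

/-- `G_κ` is a submonoid of `End(F₂)`, and `φ ↦ inducedMatrix φ` is a monoid isomorphism
from `G_κ` onto the monoid of 2×2 integer matrices with determinant 1 and nonnegative
entries: it is multiplicative, injective on `G_κ`, has image exactly the determinant-1
nonnegative matrices, and sends `T̂₁` and `T̂₂` to the two free generators `T₂`, `T₁` of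
that matrix monoid. -/
theorem Gkappa_isomorphic_unimodular_nonneg_matrices :
    (1 : Monoid.End F2) ∈ Gkappa ∧
    (∀ φ ∈ Gkappa, ∀ ψ ∈ Gkappa, φ * ψ ∈ Gkappa) ∧
    (∀ φ ∈ Gkappa, ∀ ψ ∈ Gkappa,
      inducedMatrix (φ * ψ) = inducedMatrix φ * inducedMatrix ψ) ∧
    Set.InjOn inducedMatrix Gkappa ∧
    inducedMatrix '' Gkappa =
      {M : Matrix (Fin 2) (Fin 2) ℤ | M.det = 1 ∧ ∀ i j, 0 ≤ M i j} ∧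
    ({inducedMatrix T1hat, inducedMatrix T2hat} : Set (Matrix (Fin 2) (Fin 2) ℤ)) =
      {T1, T2} := by
  refine ⟨GkappaSubmonoid.one_mem, fun φ hφ ψ hψ ↦ GkappaSubmonoid.mul_mem hφ hψ,
    fun φ _ ψ _ ↦ inducedMatrix_mul φ ψ, injOn_inducedMatrix_Gkappa, image_inducedMatrix_Gkappa, ?_⟩
  rw [inducedMatrix_T1hat, inducedMatrix_T2hat, Set.pair_comm]
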